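/- arXiv:math/0309291 — 3 statements merged into one kernel-verified Lean document; each statement's English description precedes it below -/
import Mathlib

section
/- Give ℤ^d (d ≥ 1) the ℓ¹ metric ρ(x,y) = Σ_{i=1}^{d} |x_i − y_i|, which is the word metric for the standard generators ±e_1, …, ±e_d. If a, b, c ∈ ℤ^d are such that there is no z ∈ ℤ^d with z ≠ c, ρ(a,z) + ρ(z,c) = ρ(a,c) and ρ(b,z) + ρ(z,c) = ρ(b,c), then ρ(a,c) + ρ(c,b) = ρ(a,b); in particular the perimeter ρ(a,b) + ρ(b,c) + ρ(c,a) of the triple {a,b,c} equals 2·ρ(a,b). -/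
open Filter Topology

/-- `T` is a valid domain for a ray: an unbounded subset of `[0,∞)` containing `0`. -/
def IsRayDomain (T : Set ℝ) : Prop :=
  T ⊆ Set.Ici (0 : ℝ) ∧ 0 ∈ T ∧ ∀ M : ℝ, ∃ t ∈ T, M < t

/-- A weakly-geodesic ray for the distance function `d`. -/
def WeaklyGeodesicRay {X : Type*} (d : X → X → ℝ) (T : Set ℝ) (γ : ℝ → X) : Prop :=
  ∀ y : X, ∀ ε : ℝ, 0 < ε → ∃ N : ℝ, ∀ s ∈ T, ∀ t ∈ T, N ≤ s → N ≤ t →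
    |d (γ t) (γ 0) - t| < ε ∧ |d (γ t) y - d (γ s) y - (t - s)| < ε

/-- An almost-geodesic ray for the distance function `d`. -/
def AlmostGeodesicRay {X : Type*} (d : X → X → ℝ) (T : Set ℝ) (γ : ℝ → X) : Prop :=
  ∀ ε : ℝ, 0 < ε → ∃ N : ℝ, ∀ s ∈ T, ∀ t ∈ T, N ≤ s → s ≤ t →
    |d (γ t) (γ s) + d (γ s) (γ 0) - t| < ε

/-- A geodesic ray for the distance function `d`. -/
def GeodesicRay {X : Type*} (d : X → X → ℝ) (T : Set ℝ) (γ : ℝ → X) : Prop :=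
  ∀ s ∈ T, ∀ t ∈ T, d (γ s) (γ t) = |s - t|

/-- `L` is the limit of `d(γ(t),y) - d(γ(t),z)` as `t → ∞` along `T`. -/
def RayLimit {X : Type*} (d : X → X → ℝ) (T : Set ℝ) (γ : ℝ → X) (y z : X) (L : ℝ) : Prop :=
  Tendsto (fun t => d (γ t) y - d (γ t) z) (atTop ⊓ 𝓟 T) (𝓝 L)

/-- Minimal paths from `a` to `c` and from `b` to `c` share a tail: there is a vertex
`z ≠ c` lying simultaneously on a minimal path from `a` to `c` and on one from `b` to `c`. -/
def ShareTail {V : Type*} (d : V → V → ℕ) (a b c : V) : Prop :=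
  ∃ z, z ≠ c ∧ d a z + d z c = d a c ∧ d b z + d z c = d b c

/-- No minimal paths from apex `x` to `y` and from `x` to `z` share a vertex other than `x`. -/
def RigidApex {V : Type*} (d : V → V → ℕ) (x y z : V) : Prop :=
  ∀ w, w ≠ x → ¬(d x w + d w y = d x y ∧ d x w + d w z = d x z)

/-- A rigid triple: three distinct vertices, rigid at each apex. -/
def RigidTriple {V : Type*} (d : V → V → ℕ) (x y z : V) : Prop :=
  x ≠ y ∧ y ≠ z ∧ x ≠ z ∧
    RigidApex d x y z ∧ RigidApex d y x z ∧ RigidApex d z x y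

/-- The ℓ¹ metric on `ℤ^d`, the word metric for the standard generators `±e_1, …, ±e_d`. -/
def l1dist {d : ℕ} (x y : Fin d → ℤ) : ℕ := ∑ i, (x i - y i).natAbs

/-- In `ℤ^d` (`d ≥ 1`) with the ℓ¹ metric, if the minimal paths from `a`
to `c` and from `b` to `c` do not share a tail, then `ρ(a,c) + ρ(c,b) = ρ(a,b)`; in
particular the perimeter of `{a,b,c}` equals `2·ρ(a,b)`. -/
theorem stmt13 {d : ℕ} (hd : 1 ≤ d) (a b c : Fin d → ℤ)
    (h : ¬ ShareTail (l1dist (d := d)) a b c) :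
    l1dist a c + l1dist c b = l1dist a b ∧
    l1dist a b + l1dist b c + l1dist c a = 2 * l1dist a b := by
  have hsym : ∀ x y : Fin d → ℤ, l1dist x y = l1dist y x := by
    intro x y
    unfold l1dist
    exact Finset.sum_congr rfl fun j _ => by omega
  have key : l1dist a c + l1dist c b = l1dist a b := by
    by_contra hne
    have htri : ∀ i : Fin d, (a i - b i).natAbs ≤ (a i - c i).natAbs + (c i - b i).natAbs := by
      intro i; omega
    have hge : l1dist a b ≤ l1dist a c + l1dist c b := by
      unfold l1dist
      rw [← Finset.sum_add_distrib]
      exact Finset.sum_le_sum fun i _ => htri i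
    have hex : ∃ i : Fin d, (a i - b i).natAbs < (a i - c i).natAbs + (c i - b i).natAbs := by
      by_contra hc
      push_neg at hc
      have hle : l1dist a c + l1dist c b ≤ l1dist a b := by
        unfold l1dist
        rw [← Finset.sum_add_distrib]
        exact Finset.sum_le_sum fun i _ => hc i
      omega
    obtain ⟨i, hi⟩ := hex
    have hout : (c i < a i ∧ c i < b i) ∨ (a i < c i ∧ b i < c i) := by omega
    set e : ℤ := if c i < a i then 1 else -1 with he
    have he0 : e = 1 ∨ e = -1 := by
      rw [he]; split <;> simp
    set z : Fin d → ℤ := Function.update c i (c i + e) with hz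
    apply h
    refine ⟨z, ?_, ?_, ?_⟩
    · intro hzc
      have h2 := congrFun hzc i
      rw [hz, Function.update_self] at h2
      omega
    · unfold l1dist
      rw [← Finset.sum_add_distrib]
      refine Finset.sum_congr rfl fun j _ => ?_
      by_cases hj : j = i
      · subst hj
        rw [hz, Function.update_self]
        rcases he0 with h1 | h1 <;> rw [he] at h1 <;> omega
      · rw [hz, Function.update_of_ne hj]
        omega
    · unfold l1dist
      rw [← Finset.sum_add_distrib]
      refine Finset.sum_congr rfl fun j _ => ?_
      by_cases hj : j = i
      · subst hj
        rw [hz, Function.update_self]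
        rcases he0 with h1 | h1 <;> rw [he] at h1 <;> omega
      · rw [hz, Function.update_of_ne hj]
        omega
  refine ⟨key, ?_⟩
  have h1 := hsym b c
  have h2 := hsym c a
  omega
end

section
/- Give ℤ^d (d ≥ 1) the ℓ¹ metric ρ(x,y) = Σ_{i=1}^{d} |x_i − y_i|. Then every weakly-geodesic ray γ : T → ℤ^d admits a geodesic ray γ' : T' → ℤ^d such that lim_{t→∞, t∈T} (ρ(γ(t),y) − ρ(γ(t),z)) = lim_{t→∞, t∈T'} (ρ(γ'(t),y) − ρ(γ'(t),z)) for all y, z ∈ ℤ^d; that is, every point of the metric boundary of the Cayley graph of ℤ^d with its standard generators is a Busemann point. -/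
open Filter Topology

/-- In `ℤ^d` (`d ≥ 1`) with the ℓ¹ metric, every point of the metric
boundary of the Cayley graph of `ℤ^d` with the standard generators is a Busemann point:
every weakly-geodesic ray has the same boundary limits as some geodesic ray. -/
theorem stmt14 {d : ℕ} (hd : 1 ≤ d) :
    ∀ (T : Set ℝ) (γ : ℝ → (Fin d → ℤ)), IsRayDomain T →
      WeaklyGeodesicRay (fun x y => (l1dist x y : ℝ)) T γ →
      ∃ (T' : Set ℝ) (γ' : ℝ → (Fin d → ℤ)), IsRayDomain T' ∧
        GeodesicRay (fun x y => (l1dist x y : ℝ)) T' γ' ∧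
        ∀ y z : Fin d → ℤ, ∃ L : ℝ,
          RayLimit (fun x y => (l1dist x y : ℝ)) T γ y z L ∧
          RayLimit (fun x y => (l1dist x y : ℝ)) T' γ' y z L := by
  classical
  intro T γ hT hγ
  set F : Filter ℝ := atTop ⊓ 𝓟 T with hFdef
  have hF : F.NeBot := by
    rw [hFdef, Filter.inf_principal_neBot_iff]
    intro U hU
    obtain ⟨N, hN⟩ := mem_atTop_sets.mp hU
    obtain ⟨t, htT, htN⟩ := hT.2.2 N
    exact ⟨t, hN t htN.le, htT⟩
  have hmem : ∀ N : ℝ, ∀ᶠ t in F, t ∈ T ∧ N ≤ t := by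
    intro N
    rw [hFdef, Filter.eventually_inf_principal]
    filter_upwards [Filter.eventually_ge_atTop N] with t h1 h2
    exact ⟨h2, h1⟩
  have hsplit : ∀ (x u v : Fin d → ℤ),
      (l1dist x u : ℤ) - (l1dist x v : ℤ)
        = ∑ i, (((x i - u i).natAbs : ℤ) - ((x i - v i).natAbs : ℤ)) := by
    intro x u v
    simp only [l1dist]
    push_cast
    rw [Finset.sum_sub_distrib]
  -- eventual constancy of distance differences
  have key : ∀ y z : Fin d → ℤ, ∃ cc : ℤ,
      ∀ᶠ t in F, (l1dist (γ t) y : ℤ) - (l1dist (γ t) z : ℤ) = cc := by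
    intro y z
    obtain ⟨N₁, h₁⟩ := hγ y (4⁻¹) (by norm_num)
    obtain ⟨N₂, h₂⟩ := hγ z (4⁻¹) (by norm_num)
    obtain ⟨t₀, ht₀T, ht₀⟩ := hT.2.2 (max N₁ N₂)
    refine ⟨(l1dist (γ t₀) y : ℤ) - (l1dist (γ t₀) z : ℤ), ?_⟩
    filter_upwards [hmem (max N₁ N₂)] with t ht
    have e₁ := (h₁ t₀ ht₀T t ht.1 (le_of_lt (lt_of_le_of_lt (le_max_left _ _) ht₀))
      (le_trans (le_max_left _ _) ht.2)).2
    have e₂ := (h₂ t₀ ht₀T t ht.1 (le_of_lt (lt_of_le_of_lt (le_max_right _ _) ht₀))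
      (le_trans (le_max_right _ _) ht.2)).2
    simp only at e₁ e₂
    have hlt : |((l1dist (γ t) y : ℝ) - l1dist (γ t) z) -
        ((l1dist (γ t₀) y : ℝ) - l1dist (γ t₀) z)| < 1 := by
      have hrw : ((l1dist (γ t) y : ℝ) - l1dist (γ t) z) -
          ((l1dist (γ t₀) y : ℝ) - l1dist (γ t₀) z)
          = ((l1dist (γ t) y : ℝ) - l1dist (γ t₀) y - (t - t₀)) -
            ((l1dist (γ t) z : ℝ) - l1dist (γ t₀) z - (t - t₀)) := by ring
      rw [hrw]
      calc |((l1dist (γ t) y : ℝ) - l1dist (γ t₀) y - (t - t₀)) -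
            ((l1dist (γ t) z : ℝ) - l1dist (γ t₀) z - (t - t₀))|
          ≤ |((l1dist (γ t) y : ℝ) - l1dist (γ t₀) y - (t - t₀))| +
            |((l1dist (γ t) z : ℝ) - l1dist (γ t₀) z - (t - t₀))| := abs_sub _ _
        _ < 4⁻¹ + 4⁻¹ := add_lt_add e₁ e₂
        _ < 1 := by norm_num
    have hint : |(l1dist (γ t) y : ℤ) - l1dist (γ t) z -
        ((l1dist (γ t₀) y : ℤ) - l1dist (γ t₀) z)| < 1 := by exact_mod_cast hlt
    rw [abs_lt] at hint
    omega
  choose c hc using key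
  -- per-coordinate eventual values
  have hupdate : ∀ (x : Fin d → ℤ) (i : Fin d) (k : ℤ),
      (l1dist x (Function.update 0 i k) : ℤ) - (l1dist x (0 : Fin d → ℤ) : ℤ)
        = ((x i - k).natAbs : ℤ) - ((x i).natAbs : ℤ) := by
    intro x i k
    rw [hsplit]
    rw [Finset.sum_eq_single i]
    · simp
    · intro j _ hj
      simp [Function.update_of_ne hj]
    · intro h; exact absurd (Finset.mem_univ i) h
  set m : Fin d → ℤ → ℤ := fun i k => c (Function.update 0 i k) 0 with hmdef
  have hm : ∀ i k, ∀ᶠ t in F, ((γ t i - k).natAbs : ℤ) - ((γ t i).natAbs : ℤ) = m i k := by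
    intro i k
    filter_upwards [hc (Function.update 0 i k) 0] with t ht
    rw [← hupdate (γ t) i k, ht]
  have hcm : ∀ y z, c y z = ∑ i, (m i (y i) - m i (z i)) := by
    intro y z
    have hev : ∀ᶠ t in F, ((l1dist (γ t) y : ℤ) - l1dist (γ t) z = c y z)
        ∧ ((∀ i, ((γ t i - y i).natAbs : ℤ) - ((γ t i).natAbs : ℤ) = m i (y i))
        ∧ (∀ i, ((γ t i - z i).natAbs : ℤ) - ((γ t i).natAbs : ℤ) = m i (z i))) :=
      (hc y z).and ((Filter.eventually_all.2 fun i => hm i (y i)).and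
        (Filter.eventually_all.2 fun i => hm i (z i)))
    obtain ⟨t, h1, h2, h3⟩ := hev.exists
    rw [← h1, hsplit]
    refine Finset.sum_congr rfl fun i _ => ?_
    have := h2 i
    have := h3 i
    omega
  -- classification of coordinates
  have hclass : ∀ i, ∃ (bi : Bool) (ai σi : ℤ),
      (bi = true → (∀ᶠ t in F, γ t i = ai) ∧
        ∀ k, m i k = ((ai - k).natAbs : ℤ) - ((ai).natAbs : ℤ)) ∧
      (bi = false → (σi = 1 ∨ σi = -1) ∧ ∀ k, m i k = -σi * k) := by
    intro i
    by_cases hA : ∃ a0 : ℤ, ∀ᶠ t in F, γ t i = a0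
    · obtain ⟨a0, ha0⟩ := hA
      refine ⟨true, a0, 1, fun _ => ⟨ha0, fun k => ?_⟩, by simp⟩
      obtain ⟨t, h1, h2⟩ := (ha0.and (hm i k)).exists
      rw [← h2, h1]
    · have hub : ∀ K : ℕ, ∃ᶠ t in F, K < (γ t i).natAbs := by
        intro K
        by_contra hcon
        rw [Filter.not_frequently] at hcon
        apply hA
        have hall := hcon.and ((hm i ((K : ℤ)+1)).and (hm i (-((K : ℤ)+1))))
        obtain ⟨t₀, hb0, hp0, hq0⟩ := hall.exists
        refine ⟨γ t₀ i, ?_⟩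
        filter_upwards [hall] with t ht
        obtain ⟨hb, hp, hq⟩ := ht
        omega
      obtain ⟨t₁, h1⟩ := (hm i 1).exists
      rcases le_or_gt 1 (γ t₁ i) with hpos | hneg
      · have hev1 : ∀ᶠ t in F, 1 ≤ γ t i := by
          filter_upwards [hm i 1] with t ht; omega
        refine ⟨false, 0, 1, by simp, fun _ => ⟨Or.inl rfl, fun k => ?_⟩⟩
        obtain ⟨t, hgt, hge, hk⟩ := ((hub k.natAbs).and_eventually (hev1.and (hm i k))).exists
        omega
      · have hev1 : ∀ᶠ t in F, γ t i ≤ 0 := by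
          filter_upwards [hm i 1] with t ht; omega
        refine ⟨false, 0, -1, by simp, fun _ => ⟨Or.inr rfl, fun k => ?_⟩⟩
        obtain ⟨t, hgt, hge, hk⟩ := ((hub k.natAbs).and_eventually (hev1.and (hm i k))).exists
        omega
  choose b a σ hbt hbf using hclass
  -- there is an infinite coordinate
  have hex : ∃ i, b i = false := by
    by_contra hcon
    push_neg at hcon
    have hball : ∀ i, b i = true := by
      intro i; have := hcon i; revert this; cases b i <;> simp
    have hall : ∀ᶠ t in F, ∀ i, γ t i = a i :=
      Filter.eventually_all.2 fun i => (hbt i (hball i)).1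
    obtain ⟨N, hN⟩ := hγ 0 1 one_pos
    rw [hFdef, Filter.eventually_inf_principal, Filter.eventually_atTop] at hall
    obtain ⟨N', hN'⟩ := hall
    set C : ℝ := (l1dist a (γ 0) : ℝ) with hCdef
    obtain ⟨t, htT, hgt⟩ := hT.2.2 (max N (max N' (C + 1)))
    have h1 := (hN t htT t htT (le_of_lt (lt_of_le_of_lt (le_max_left _ _) hgt))
      (le_of_lt (lt_of_le_of_lt (le_max_left _ _) hgt))).1
    simp only at h1
    have h2 : γ t = a := funext (hN' t
      (le_of_lt (lt_of_le_of_lt (le_trans (le_max_left _ _) (le_max_right _ _)) hgt)) htT)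
    rw [h2] at h1
    rw [abs_lt] at h1
    have h3 : C + 1 < t := lt_of_le_of_lt (le_trans (le_max_right _ _) (le_max_right _ _)) hgt
    rw [hCdef] at h3
    linarith [h1.2]
  obtain ⟨i₀, hi₀⟩ := hex
  -- construction of the geodesic ray
  set q : ℕ → Fin d → ℤ :=
    fun n i => if b i = true then max (-(n : ℤ)) (min (n : ℤ) (a i)) else σ i * n with hqdef
  set tN : ℕ → ℕ := fun n => l1dist (q n) 0 with htNdef
  have hq0 : q 0 = 0 := by
    funext i
    simp only [hqdef]
    split
    · simp only [Nat.cast_zero, neg_zero, Pi.zero_apply]; omega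
    · simp
  have htN0 : tN 0 = 0 := by
    simp [htNdef, hq0, l1dist]
  have hkey : ∀ m' n' : ℕ, m' ≤ n' → ∀ i,
      (q m' i - q n' i).natAbs + (q m' i).natAbs = (q n' i).natAbs := by
    intro m' n' hmn i
    simp only [hqdef]
    split
    · omega
    · rename_i h
      rw [Bool.not_eq_true] at h
      rcases (hbf i h).1 with h1 | h1 <;> rw [h1] <;> omega
  have htNadd : ∀ m' n' : ℕ, m' ≤ n' → l1dist (q m') (q n') + tN m' = tN n' := by
    intro m' n' hmn
    simp only [htNdef, l1dist, Pi.zero_apply, sub_zero, ← Finset.sum_add_distrib]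
    refine Finset.sum_congr rfl fun i _ => ?_
    have := hkey m' n' hmn i
    omega
  have htNlt : ∀ m' n' : ℕ, m' < n' → tN m' < tN n' := by
    intro m' n' h
    have hadd := htNadd m' n' h.le
    have hterm : 0 < (q m' i₀ - q n' i₀).natAbs := by
      simp only [hqdef, hi₀]
      simp only [Bool.false_eq_true, if_false]
      rcases (hbf i₀ hi₀).1 with h1 | h1 <;> rw [h1] <;> omega
    have hle : (q m' i₀ - q n' i₀).natAbs ≤ l1dist (q m') (q n') :=
      Finset.single_le_sum (f := fun i => (q m' i - q n' i).natAbs)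
        (fun i _ => Nat.zero_le _) (Finset.mem_univ i₀)
    omega
  have htNinj : ∀ k n : ℕ, tN k = tN n → k = n := by
    intro k n h
    rcases lt_trichotomy k n with h' | h' | h'
    · have := htNlt k n h'; omega
    · exact h'
    · have := htNlt n k h'; omega
  have htNge : ∀ n : ℕ, n ≤ tN n := by
    intro n
    have hterm : (q n i₀ - 0).natAbs = n := by
      simp only [hqdef, hi₀]
      simp only [Bool.false_eq_true, if_false]
      rcases (hbf i₀ hi₀).1 with h1 | h1 <;> rw [h1] <;> omega
    have hle : (q n i₀ - 0).natAbs ≤ tN n :=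
      Finset.single_le_sum (f := fun i => (q n i - 0).natAbs)
        (fun i _ => Nat.zero_le _) (Finset.mem_univ i₀)
    omega
  set T' : Set ℝ := Set.range (fun n : ℕ => ((tN n : ℕ) : ℝ)) with hT'def
  set γ' : ℝ → Fin d → ℤ :=
    fun s => if h : ∃ n : ℕ, ((tN n : ℕ) : ℝ) = s then q h.choose else 0 with hγ'def
  have hγ'q : ∀ n : ℕ, γ' ((tN n : ℕ) : ℝ) = q n := by
    intro n
    have hex' : ∃ k : ℕ, ((tN k : ℕ) : ℝ) = ((tN n : ℕ) : ℝ) := ⟨n, rfl⟩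
    simp only [hγ'def]
    rw [dif_pos hex']
    have h1 := hex'.choose_spec
    have h2 : tN hex'.choose = tN n := by exact_mod_cast h1
    exact congrArg q (htNinj _ _ h2)
  have hl1comm : ∀ x y : Fin d → ℤ, l1dist x y = l1dist y x := by
    intro x y
    unfold l1dist
    exact Finset.sum_congr rfl fun i _ => by omega
  refine ⟨T', γ', ⟨?_, ?_, ?_⟩, ?_, ?_⟩
  · rintro s ⟨n, rfl⟩
    simp only [Set.mem_Ici]
    positivity
  · exact ⟨0, by simp [htN0]⟩
  · intro M
    obtain ⟨n, hn⟩ := exists_nat_gt M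
    refine ⟨((tN n : ℕ) : ℝ), ⟨n, rfl⟩, lt_of_lt_of_le hn ?_⟩
    exact_mod_cast htNge n
  · -- geodesic
    rintro s ⟨mₙ, rfl⟩ t ⟨nₙ, rfl⟩
    show (l1dist (γ' ((tN mₙ : ℕ) : ℝ)) (γ' ((tN nₙ : ℕ) : ℝ)) : ℝ)
      = |((tN mₙ : ℕ) : ℝ) - ((tN nₙ : ℕ) : ℝ)|
    rw [hγ'q, hγ'q]
    rcases le_total mₙ nₙ with h | h
    · have hadd := htNadd mₙ nₙ h
      have hle : tN mₙ ≤ tN nₙ := by omega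
      have hleR : ((tN mₙ : ℕ) : ℝ) ≤ ((tN nₙ : ℕ) : ℝ) := by exact_mod_cast hle
      rw [abs_of_nonpos (by linarith)]
      have hcast : (l1dist (q mₙ) (q nₙ) : ℝ) + (tN mₙ : ℕ) = ((tN nₙ : ℕ) : ℝ) := by
        exact_mod_cast hadd
      linarith
    · have hadd := htNadd nₙ mₙ h
      have hle : tN nₙ ≤ tN mₙ := by omega
      have hleR : ((tN nₙ : ℕ) : ℝ) ≤ ((tN mₙ : ℕ) : ℝ) := by exact_mod_cast hle
      rw [abs_of_nonneg (by linarith)]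
      rw [hl1comm]
      have hcast : (l1dist (q nₙ) (q mₙ) : ℝ) + (tN nₙ : ℕ) = ((tN mₙ : ℕ) : ℝ) := by
        exact_mod_cast hadd
      linarith
  · -- limits
    intro y z
    refine ⟨(c y z : ℝ), ?_, ?_⟩
    · refine Tendsto.congr' ?_ tendsto_const_nhds
      filter_upwards [hc y z] with t ht
      have : (((l1dist (γ t) y : ℤ) - (l1dist (γ t) z : ℤ) : ℤ) : ℝ) = ((c y z : ℤ) : ℝ) := by
        exact_mod_cast congrArg (fun u : ℤ => (u : ℝ)) ht
      push_cast at this ⊢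
      linarith
    · set n₀ : ℕ := ∑ i, ((a i).natAbs + (y i).natAbs + (z i).natAbs) with hn₀def
      have hbound : ∀ i, (a i).natAbs ≤ n₀ ∧ (y i).natAbs ≤ n₀ ∧ (z i).natAbs ≤ n₀ := by
        intro i
        have h := Finset.single_le_sum
          (f := fun i => (a i).natAbs + (y i).natAbs + (z i).natAbs)
          (fun i _ => Nat.zero_le _) (Finset.mem_univ i)
        beta_reduce at h
        rw [hn₀def]
        omega
      have hEq : ∀ n : ℕ, n₀ ≤ n → (l1dist (q n) y : ℤ) - (l1dist (q n) z : ℤ) = c y z := by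
        intro n hn
        rw [hcm y z, hsplit]
        refine Finset.sum_congr rfl fun i _ => ?_
        obtain ⟨hb1, hb2, hb3⟩ := hbound i
        by_cases hbi : b i = true
        · have hqa : q n i = a i := by
            simp only [hqdef]
            rw [if_pos hbi]
            omega
          have hk := (hbt i hbi).2
          rw [hqa, hk (y i), hk (z i)]
          ring
        · rw [Bool.not_eq_true] at hbi
          obtain ⟨hσ, hk⟩ := hbf i hbi
          have hqa : q n i = σ i * n := by
            simp only [hqdef]
            rw [if_neg (by simp [hbi])]
          rw [hqa, hk (y i), hk (z i)]
          rcases hσ with h1 | h1 <;> rw [h1] <;> omega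
      refine Tendsto.congr' ?_ tendsto_const_nhds
      rw [Filter.EventuallyEq, Filter.eventually_inf_principal]
      filter_upwards [Filter.eventually_ge_atTop ((tN n₀ : ℕ) : ℝ)] with s hs hsT'
      obtain ⟨n, rfl⟩ := hsT'
      show (c y z : ℝ)
        = (l1dist (γ' ((tN n : ℕ) : ℝ)) y : ℝ) - (l1dist (γ' ((tN n : ℕ) : ℝ)) z : ℝ)
      rw [hγ'q]
      have hn : n₀ ≤ n := by
        by_contra hcon
        push_neg at hcon
        have h1 := htNlt n n₀ hcon
        have hs' : ((tN n₀ : ℕ) : ℝ) ≤ ((tN n : ℕ) : ℝ) := hs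
        have h2 : tN n₀ ≤ tN n := by exact_mod_cast hs'
        omega
      have := hEq n hn
      have hcast : (((l1dist (q n) y : ℤ) - (l1dist (q n) z : ℤ) : ℤ) : ℝ) = ((c y z : ℤ) : ℝ) := by
        exact_mod_cast congrArg (fun u : ℤ => (u : ℝ)) this
      push_cast at hcast ⊢
      linarith
end

section
/- Let B₃ be the braid group on three strands, i.e. the group presented by generators σ₁, σ₂ and the single relation σ₁σ₂σ₁ = σ₂σ₁σ₂ (for instance, the presented group with relator σ₁σ₂σ₁σ₂⁻¹σ₁⁻¹σ₂⁻¹), and let d be the word metric on B₃ with respect to the symmetric generating set S = {σ₁, σ₁⁻¹, σ₂, σ₂⁻¹}. Then there exists a weakly-geodesic ray γ : T → B₃ such that for every geodesic ray γ' : T' → B₃ there exist y, z ∈ B₃ with lim_{t→∞, t∈T} (d(γ(t),y) − d(γ(t),z)) ≠ lim_{t→∞, t∈T'} (d(γ'(t),y) − d(γ'(t),z)); that is, the metric boundary of this Cayley graph of B₃ contains a point which is not a Busemann point. -/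
open Filter Topology

/-- The word metric on a group `G` with respect to a generating set `S`:
`wordDist S g h` is the least `n` such that `g⁻¹ * h` is a product of `n` elements of `S`. -/
noncomputable def wordDist {G : Type*} [Group G] (S : Set G) (g h : G) : ℕ :=
  sInf {n | ∃ l : List G, l.length = n ∧ (∀ x ∈ l, x ∈ S) ∧ l.prod = g⁻¹ * h}

/-- The braid relator `σ₁σ₂σ₁σ₂⁻¹σ₁⁻¹σ₂⁻¹` in the free group on two generators. -/
def braidRel : Set (FreeGroup (Fin 2)) :=
  {FreeGroup.of 0 * FreeGroup.of 1 * FreeGroup.of 0 *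
    (FreeGroup.of 1)⁻¹ * (FreeGroup.of 0)⁻¹ * (FreeGroup.of 1)⁻¹}

/-- The braid group `B₃` on three strands, presented by generators `σ₁, σ₂` and the
single relation `σ₁σ₂σ₁ = σ₂σ₁σ₂`. -/
abbrev B3 := PresentedGroup braidRel

/-- The generators `σ₁, σ₂` of `B₃`. -/
def σ (i : Fin 2) : B3 := PresentedGroup.of i

open Set

/-!
The braid group maps onto `PSL(2, ℤ) ≅ ℤ/2 ∗ ℤ/3 = ⟨s⟩ ∗ ⟨r⟩` by `σ₁ ↦ r²s`, `σ₂ ↦ sr²`, and the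
number of `r`-letters in the reduced word of the image grows by at most one per generator. Hence
`xₙ = σ₁ⁿσ₂⁻ⁿ` has length `2n`, and `σ₁ⁿσ₂⁻ⁿ` is its only geodesic word. Along a subsequence the
functions `d(xₙ, ·) - 2n` stabilise to some `h`, and a weakly-geodesic ray through these `xₙ`
has `h` as its horofunction.

Since the metric is integer valued, the Busemann function `F` of a geodesic ray `γ'` is attained:
`F = d(γ' s, ·) - s` on any finite set once `s` is large. If `h - F` were constant, then `p = γ' s`
would satisfy `h p = -|p|`, i.e. lie on geodesics from `1` to `xₙ`, which forces `p = σ₁^|p|`.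
Then `h (σ₁σ₂)⁻¹ = h p + d(p, (σ₁σ₂)⁻¹) = 2`, whereas `σ₁σ₂xₙ = σ₂ⁿσ₁σ₂^(1-n)` has length at
most `2n`, so `h (σ₁σ₂)⁻¹ ≤ 0`.
-/

theorem eventually_atTop_inf_principal_insert_range {a : ℝ} {g : ℕ → ℝ} {P : ℝ → Prop}
    (h : ∀ᶠ k in atTop, P (g k)) : ∀ᶠ t in atTop ⊓ 𝓟 (insert a (range g)), P t := by
  rw [← Nat.cofinite_eq_atTop, eventually_cofinite] at h
  obtain ⟨N, hN⟩ := (h.image g).bddAbove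
  rw [eventually_inf_principal]
  filter_upwards [eventually_gt_atTop (max a N)] with t ht hmem
  obtain rfl | ⟨k, rfl⟩ := hmem
  · exact absurd ht (not_lt.mpr (le_max_left _ _))
  · by_contra hk
    exact absurd (hN (mem_image_of_mem g hk)) (not_le.mpr ((le_max_right _ _).trans_lt ht))

theorem exists_eventually_eq_of_antitoneOn {T : Set ℝ} {f : ℝ → ℝ} {c : ℝ} (hT : T.Nonempty)
    (hf : AntitoneOn f T) (hℤ : ∀ t ∈ T, ∃ n : ℤ, f t = n) (hc : ∀ t ∈ T, c ≤ f t) :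
    ∃ a, ∀ᶠ t in atTop ⊓ 𝓟 T, f t = a := by
  obtain ⟨t₀, ht₀⟩ := hT
  obtain ⟨n₀, ⟨t₁, ht₁, hft₁⟩, hleast⟩ :=
    Int.exists_least_of_bdd (P := fun n : ℤ ↦ ∃ t ∈ T, f t = n)
      ⟨⌊c⌋, fun n ⟨t, ht, hn⟩ ↦ Int.cast_le.mp ((Int.floor_le c).trans (hn ▸ hc t ht))⟩
      (let ⟨n, hn⟩ := hℤ t₀ ht₀; ⟨n, t₀, ht₀, hn⟩)
  refine ⟨n₀, eventually_inf_principal.mpr ?_⟩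
  filter_upwards [eventually_ge_atTop t₁] with t hle ht
  obtain ⟨n, hn⟩ := hℤ t ht
  have := Int.cast_le (R := ℝ).mpr (hleast n ⟨t, ht, hn⟩)
  linarith [hf ht₁ ht hle]

theorem IsRayDomain.neBot {T : Set ℝ} (hT : IsRayDomain T) : (atTop ⊓ 𝓟 T).NeBot :=
  frequently_iff_neBot.mp <| frequently_atTop.mpr fun a ↦
    let ⟨t, htT, hat⟩ := hT.2.2 a; ⟨t, hat.le, htT⟩

theorem isRayDomain_insert_zero_range {g : ℕ → ℝ} (hg₀ : ∀ k, 0 ≤ g k)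
    (hg : Tendsto g atTop atTop) : IsRayDomain (insert 0 (range g)) := by
  refine ⟨?_, mem_insert _ _, fun M ↦ ?_⟩
  · rintro t (rfl | ⟨k, rfl⟩)
    exacts [le_refl (0 : ℝ), hg₀ k]
  · obtain ⟨k, hk⟩ := (hg.eventually_gt_atTop M).exists
    exact ⟨g k, mem_insert_of_mem _ (mem_range_self k), hk⟩

section Horofunction

variable {X : Type*} {d : X → X → ℝ} {T : Set ℝ} {γ : ℝ → X} {F : X → ℝ}

def IsEventualHorofunction (d : X → X → ℝ) (T : Set ℝ) (γ : ℝ → X) (F : X → ℝ) : Prop :=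
  ∀ y, ∀ᶠ t in atTop ⊓ 𝓟 T, d (γ t) y - t = F y

theorem IsEventualHorofunction.rayLimit (hF : IsEventualHorofunction d T γ F) (y z : X) :
    RayLimit d T γ y z (F y - F z) :=
  tendsto_const_nhds.congr' <| ((hF y).and (hF z)).mono fun t ⟨hy, hz⟩ ↦ by
    rw [← hy, ← hz]; ring

theorem IsEventualHorofunction.weaklyGeodesicRay (hF : IsEventualHorofunction d T γ F)
    (hF₀ : F (γ 0) = 0) : WeaklyGeodesicRay d T γ := by
  intro y ε hε
  obtain ⟨N, hN⟩ := eventually_atTop.mp (eventually_inf_principal.mp ((hF y).and (hF (γ 0))))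
  refine ⟨N, fun s hs t ht hNs hNt ↦ ?_⟩
  obtain ⟨hty, ht₀⟩ := hN t hNt ht
  obtain ⟨hsy, -⟩ := hN s hNs hs
  constructor <;> rw [abs_lt] <;> constructor <;> linarith

end Horofunction

section GeodesicRay

variable {X : Type*} {d : X → X → ℕ} {T : Set ℝ} {γ : ℝ → X}

theorem GeodesicRay.dist_of_le (hγ : GeodesicRay (fun a b ↦ (d a b : ℝ)) T γ) {s t : ℝ}
    (hs : s ∈ T) (ht : t ∈ T) (hst : s ≤ t) : (d (γ t) (γ s) : ℝ) = t - s :=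
  (hγ t ht s hs).trans (abs_of_nonneg (sub_nonneg.mpr hst))

theorem GeodesicRay.dist_zero (hγ : GeodesicRay (fun a b ↦ (d a b : ℝ)) T γ)
    (hT : IsRayDomain T) {t : ℝ} (ht : t ∈ T) : (d (γ t) (γ 0) : ℝ) = t := by
  simpa using hγ.dist_of_le hT.2.1 ht (hT.1 ht)

theorem GeodesicRay.exists_isEventualHorofunction (hsymm : ∀ a b, d a b = d b a)
    (htri : ∀ a b c, d a c ≤ d a b + d b c) (hT : IsRayDomain T)
    (hγ : GeodesicRay (fun a b ↦ (d a b : ℝ)) T γ) :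
    ∃ F, IsEventualHorofunction (fun a b ↦ (d a b : ℝ)) T γ F := by
  have htri' a b c : (d a c : ℝ) ≤ d a b + d b c := by exact_mod_cast htri a b c
  choose F hF using fun y ↦ exists_eventually_eq_of_antitoneOn
    (f := fun t ↦ (d (γ t) y : ℝ) - t) (c := -d (γ 0) y) ⟨0, hT.2.1⟩
    (fun s hs t ht hst ↦ by linarith [htri' (γ t) (γ s) y, hγ.dist_of_le hs ht hst])
    (fun t ht ↦ ⟨d (γ t) y - d (γ t) (γ 0), by push_cast; rw [hγ.dist_zero hT ht]⟩)
    (fun t ht ↦ by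
      have := htri' (γ 0) y (γ t)
      rw [hsymm y, hsymm (γ 0)] at this
      linarith [hγ.dist_zero hT ht])
  exact ⟨F, hF⟩

theorem IsEventualHorofunction.apply_geodesicRay {F : X → ℝ}
    (hF : IsEventualHorofunction (fun a b ↦ (d a b : ℝ)) T γ F) (hT : IsRayDomain T)
    (hγ : GeodesicRay (fun a b ↦ (d a b : ℝ)) T γ) {s : ℝ} (hs : s ∈ T) : F (γ s) = -s := by
  have := hT.neBot
  obtain ⟨t, hFt, hst, ht⟩ :=
    ((hF (γ s)).and ((eventually_ge_atTop s).filter_mono inf_le_left |>.and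
      (eventually_mem_principal T |>.filter_mono inf_le_right))).exists
  beta_reduce at hFt
  linarith [hγ.dist_of_le hs ht hst]

end GeodesicRay

theorem exists_strictMono_eventually_eq {X : Type*} [Countable X] (c : ℕ → X → ℤ)
    (B : X → ℤ) (hc : ∀ n y, |c n y| ≤ B y) :
    ∃ φ : ℕ → ℕ, StrictMono φ ∧ ∃ h : X → ℤ, ∀ y, ∀ᶠ k in atTop, c (φ k) y = h y := by
  have hK : IsCompact (univ.pi fun y ↦ Icc (-B y) (B y)) :=
    isCompact_univ_pi fun y ↦ (finite_Icc _ _).isCompact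
  obtain ⟨h, -, φ, hφ, hlim⟩ :=
    hK.tendsto_subseq fun n ↦ mem_univ_pi.mpr fun y ↦ abs_le.mp (hc n y)
  refine ⟨φ, hφ, h, fun y ↦ ?_⟩
  have := tendsto_pi_nhds.mp hlim y
  rwa [nhds_discrete, tendsto_pure] at this

section WordMetric

variable {G : Type*} [Group G] {S : Set G}

noncomputable def wordLength (S : Set G) (g : G) : ℕ := wordDist S 1 g

theorem wordDist_eq_wordLength (g h : G) : wordDist S g h = wordLength S (g⁻¹ * h) := by
  simp [wordLength, wordDist]

theorem wordLength_list_prod_le {l : List G} (hl : ∀ x ∈ l, x ∈ S) :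
    wordLength S l.prod ≤ l.length :=
  Nat.sInf_le ⟨l, rfl, hl, by simp⟩

theorem wordLength_le_one {x : G} (hx : x ∈ S) : wordLength S x ≤ 1 := by
  simpa using wordLength_list_prod_le (S := S) (l := [x]) (by simpa)

theorem wordLength_pow_le {x : G} (hx : x ∈ S) (n : ℕ) : wordLength S (x ^ n) ≤ n := by
  simpa using wordLength_list_prod_le (S := S) (l := List.replicate n x)
    (fun y hy ↦ List.eq_of_mem_replicate hy ▸ hx)

theorem exists_list_prod_eq_of_wordLength (hS : Submonoid.closure S = ⊤) (g : G) :
    ∃ l : List G, (∀ x ∈ l, x ∈ S) ∧ l.prod = g ∧ l.length = wordLength S g := by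
  obtain ⟨l, hlS, hl⟩ := Submonoid.exists_list_of_mem_closure (hS ▸ Submonoid.mem_top g)
  obtain ⟨l, hlen, hlS, hl⟩ := Nat.sInf_mem (s := {n | ∃ l : List G, l.length = n ∧
    (∀ x ∈ l, x ∈ S) ∧ l.prod = 1⁻¹ * g}) ⟨l.length, l, rfl, hlS, by simpa⟩
  exact ⟨l, hlS, by simpa using hl, hlen⟩

theorem wordLength_mul_le (hS : Submonoid.closure S = ⊤) (g h : G) :
    wordLength S (g * h) ≤ wordLength S g + wordLength S h := by
  obtain ⟨l₁, hl₁S, rfl, hl₁⟩ := exists_list_prod_eq_of_wordLength hS g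
  obtain ⟨l₂, hl₂S, rfl, hl₂⟩ := exists_list_prod_eq_of_wordLength hS h
  rw [← hl₁, ← hl₂, ← List.length_append, ← List.prod_append]
  exact wordLength_list_prod_le fun x hx ↦ (List.mem_append.mp hx).elim (hl₁S x) (hl₂S x)

theorem wordLength_mul_mul_le (hS : Submonoid.closure S = ⊤) (g h k : G) :
    wordLength S (g * h * k) ≤ wordLength S g + wordLength S h + wordLength S k :=
  (wordLength_mul_le hS _ _).trans (Nat.add_le_add_right (wordLength_mul_le hS _ _) _)

theorem le_wordLength (hS : Submonoid.closure S = ⊤) {f : G → ℤ} (hf₁ : f 1 ≤ 0)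
    (hf : ∀ x ∈ S, ∀ g, f (x * g) ≤ f g + 1) (g : G) : f g ≤ wordLength S g := by
  obtain ⟨l, hlS, rfl, hl⟩ := exists_list_prod_eq_of_wordLength hS g
  rw [← hl]
  clear hl
  induction l with
  | nil => simpa using hf₁
  | cons x l ih =>
    rw [List.prod_cons, List.length_cons, Nat.cast_succ]
    linarith [hf x (hlS x List.mem_cons_self) l.prod,
      ih fun y hy ↦ hlS y (List.mem_cons_of_mem x hy)]

theorem wordLength_inv (hS : Submonoid.closure S = ⊤) (hS' : ∀ x ∈ S, x⁻¹ ∈ S) (g : G) :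
    wordLength S g⁻¹ = wordLength S g := by
  have key (g : G) : wordLength S g⁻¹ ≤ wordLength S g := by
    obtain ⟨l, hlS, rfl, hl⟩ := exists_list_prod_eq_of_wordLength hS g
    rw [List.prod_inv_reverse, ← hl, ← List.length_map (·⁻¹), ← List.length_reverse]
    exact wordLength_list_prod_le fun x hx ↦ by
      obtain ⟨y, hy, rfl⟩ := List.mem_map.mp (List.mem_reverse.mp hx)
      exact hS' y (hlS y hy)
  exact le_antisymm (key g) (by simpa using key g⁻¹)

theorem wordDist_comm (hS : Submonoid.closure S = ⊤) (hS' : ∀ x ∈ S, x⁻¹ ∈ S) (g h : G) :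
    wordDist S g h = wordDist S h g := by
  rw [wordDist_eq_wordLength, wordDist_eq_wordLength, ← wordLength_inv hS hS', mul_inv_rev,
    inv_inv]

theorem wordDist_one_right (hS : Submonoid.closure S = ⊤) (hS' : ∀ x ∈ S, x⁻¹ ∈ S) (g : G) :
    wordDist S g 1 = wordLength S g := by
  rw [wordDist_eq_wordLength, mul_one, wordLength_inv hS hS']

theorem wordDist_triangle (hS : Submonoid.closure S = ⊤) (g h k : G) :
    wordDist S g k ≤ wordDist S g h + wordDist S h k := by
  simpa only [wordDist_eq_wordLength, mul_assoc, mul_inv_cancel_left] using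
    wordLength_mul_le hS (g⁻¹ * h) (h⁻¹ * k)

end WordMetric

theorem braid_relator_eq_one_iff {H : Type*} [Group H] (a b : H) :
    a * b * a * b⁻¹ * a⁻¹ * b⁻¹ = 1 ↔ a * b * a = b * a * b := by
  rw [show a * b * a * b⁻¹ * a⁻¹ * b⁻¹ = a * b * a * (b * a * b)⁻¹ by group, mul_inv_eq_one]

theorem braid_of_mul_self_eq_one_of_pow_three_eq_one {H : Type*} [Group H] {a b : H}
    (ha : a * a = 1) (hb : b ^ 3 = 1) : b * a * (a * b) * (b * a) = a * b * (b * a) * (a * b) :=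
  calc b * a * (a * b) * (b * a) = b * (a * a) * b * b * a := by group
    _ = b ^ 3 * a := by rw [ha]; simp only [pow_three', mul_one]
    _ = a * b ^ 3 := by rw [hb, one_mul, mul_one]
    _ = a * b * b * (a * a) * b := by rw [ha]; simp only [pow_three', mul_one, mul_assoc]
    _ = a * b * (b * a) * (a * b) := by group

namespace B3

local notation "S₃" => ({σ 0, (σ 0)⁻¹, σ 1, (σ 1)⁻¹} : Set B3)

theorem closure_gens : Submonoid.closure S₃ = ⊤ := by
  have : S₃ = range PresentedGroup.of ∪ (range PresentedGroup.of)⁻¹ := by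
    ext g
    simp only [mem_insert_iff, mem_singleton_iff, mem_union, mem_range, Set.mem_inv,
      Fin.exists_fin_two, σ]
    rw [eq_comm (b := g⁻¹), eq_comm (b := g⁻¹), inv_eq_iff_eq_inv, inv_eq_iff_eq_inv]
    tauto
  rw [this, ← Subgroup.closure_toSubmonoid, PresentedGroup.closure_range_of]
  rfl

theorem inv_mem_gens : ∀ g ∈ S₃, g⁻¹ ∈ S₃ := by
  simp only [mem_insert_iff, mem_singleton_iff]
  rintro g (rfl | rfl | rfl | rfl) <;> simp

/-- Letters of reduced words in `PSL(2, ℤ) ≅ ℤ/2 ∗ ℤ/3 = ⟨s⟩ ∗ ⟨r⟩`; `r2` stands for `r²`. -/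
inductive Letter
  | s | r | r2

open Letter

def Letter.isR : Letter → Bool
  | s => false
  | _ => true

def Reduced (l : List Letter) : Prop := l.IsChain fun a b ↦ a.isR ≠ b.isR

-- Left multiplication by `s`, `r` and `r²` on reduced words.

def mulS : List Letter → List Letter
  | s :: t => t
  | t => s :: t

def mulR : List Letter → List Letter
  | r :: t => r2 :: t
  | r2 :: t => t
  | t => r :: t

def mulR2 : List Letter → List Letter
  | r :: t => t
  | r2 :: t => r :: t
  | t => r2 :: t

theorem reduced_mulS {l : List Letter} (hl : Reduced l) : Reduced (mulS l) := by
  rcases l with _ | ⟨_ | _ | _, _ | ⟨_ | _ | _, t⟩⟩ <;> simp_all [Reduced, mulS, Letter.isR]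

theorem reduced_mulR {l : List Letter} (hl : Reduced l) : Reduced (mulR l) := by
  rcases l with _ | ⟨_ | _ | _, _ | ⟨_ | _ | _, t⟩⟩ <;> simp_all [Reduced, mulR, Letter.isR]

theorem reduced_mulR2 {l : List Letter} (hl : Reduced l) : Reduced (mulR2 l) := by
  rcases l with _ | ⟨_ | _ | _, _ | ⟨_ | _ | _, t⟩⟩ <;> simp_all [Reduced, mulR2, Letter.isR]

theorem mulS_mulS {l : List Letter} (hl : Reduced l) : mulS (mulS l) = l := by
  rcases l with _ | ⟨_ | _ | _, _ | ⟨_ | _ | _, t⟩⟩ <;> simp_all [Reduced, mulS, Letter.isR]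

theorem mulR_mulR2 {l : List Letter} (hl : Reduced l) : mulR (mulR2 l) = l := by
  rcases l with _ | ⟨_ | _ | _, _ | ⟨_ | _ | _, t⟩⟩ <;>
    simp_all [Reduced, mulR, mulR2, Letter.isR]

theorem mulR2_mulR {l : List Letter} (hl : Reduced l) : mulR2 (mulR l) = l := by
  rcases l with _ | ⟨_ | _ | _, _ | ⟨_ | _ | _, t⟩⟩ <;>
    simp_all [Reduced, mulR, mulR2, Letter.isR]

theorem mulR2_mulR2_mulR2 {l : List Letter} (hl : Reduced l) :
    mulR2 (mulR2 (mulR2 l)) = l := by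
  rcases l with _ | ⟨_ | _ | _, _ | ⟨_ | _ | _, t⟩⟩ <;> simp_all [Reduced, mulR2, Letter.isR]

abbrev ReducedWord : Type := {l : List Letter // Reduced l}

def sPerm : Equiv.Perm ReducedWord where
  toFun l := ⟨mulS l.1, reduced_mulS l.2⟩
  invFun l := ⟨mulS l.1, reduced_mulS l.2⟩
  left_inv l := Subtype.ext (mulS_mulS l.2)
  right_inv l := Subtype.ext (mulS_mulS l.2)

def r2Perm : Equiv.Perm ReducedWord where
  toFun l := ⟨mulR2 l.1, reduced_mulR2 l.2⟩
  invFun l := ⟨mulR l.1, reduced_mulR l.2⟩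
  left_inv l := Subtype.ext (mulR_mulR2 l.2)
  right_inv l := Subtype.ext (mulR2_mulR l.2)

def genPerm : Fin 2 → Equiv.Perm ReducedWord := ![r2Perm * sPerm, sPerm * r2Perm]

theorem lift_genPerm_braidRel : ∀ g ∈ braidRel, FreeGroup.lift genPerm g = 1 := by
  rintro _ rfl
  have hs : sPerm * sPerm = 1 := Equiv.ext fun l ↦ Subtype.ext (mulS_mulS l.2)
  have hr : r2Perm ^ 3 = 1 := Equiv.ext fun l ↦ Subtype.ext (mulR2_mulR2_mulR2 l.2)
  simp only [map_mul, map_inv, FreeGroup.lift_apply_of, genPerm, Matrix.cons_val_zero,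
    Matrix.cons_val_one]
  exact (braid_relator_eq_one_iff _ _).mpr (braid_of_mul_self_eq_one_of_pow_three_eq_one hs hr)

/-- The action of `B₃` on reduced words through `B₃ → PSL(2, ℤ)`. -/
noncomputable def toPerm : B3 →* Equiv.Perm ReducedWord :=
  PresentedGroup.toGroup lift_genPerm_braidRel

/-- The reduced word of the image of `g` in `PSL(2, ℤ)`. -/
noncomputable def nf (g : B3) : List Letter := (toPerm g ⟨[], List.isChain_nil⟩).1

theorem nf_one : nf 1 = [] := rfl

theorem toPerm_σ (i : Fin 2) : toPerm (σ i) = genPerm i := PresentedGroup.toGroup.of _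

theorem nf_σ0_mul (g : B3) : nf (σ 0 * g) = mulR2 (mulS (nf g)) := by
  rw [nf, map_mul, toPerm_σ]; rfl

theorem nf_σ1_mul (g : B3) : nf (σ 1 * g) = mulS (mulR2 (nf g)) := by
  rw [nf, map_mul, toPerm_σ]; rfl

theorem nf_σ0_inv_mul (g : B3) : nf ((σ 0)⁻¹ * g) = mulS (mulR (nf g)) := by
  rw [nf, map_mul, map_inv, toPerm_σ]; rfl

theorem nf_σ1_inv_mul (g : B3) : nf ((σ 1)⁻¹ * g) = mulR (mulS (nf g)) := by
  rw [nf, map_mul, map_inv, toPerm_σ]; rfl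

def rCount (l : List Letter) : ℕ := l.countP (·.isR)

theorem rCount_nil : rCount [] = 0 := rfl

theorem rCount_cons_s (l : List Letter) : rCount (s :: l) = rCount l := by
  simp [rCount, Letter.isR]

theorem rCount_cons_r (l : List Letter) : rCount (r :: l) = rCount l + 1 := by
  simp [rCount, Letter.isR]

theorem rCount_cons_r2 (l : List Letter) : rCount (r2 :: l) = rCount l + 1 := by
  simp [rCount, Letter.isR]

theorem rCount_mulS (l : List Letter) : rCount (mulS l) = rCount l := by
  rcases l with _ | ⟨_ | _ | _, t⟩ <;> simp [mulS, rCount_cons_s, rCount_cons_r, rCount_cons_r2]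

theorem rCount_mulR_le (l : List Letter) : rCount (mulR l) ≤ rCount l + 1 := by
  rcases l with _ | ⟨_ | _ | _, t⟩ <;>
    simp [mulR, rCount_nil, rCount_cons_s, rCount_cons_r, rCount_cons_r2, add_assoc]

theorem rCount_mulR2_le (l : List Letter) : rCount (mulR2 l) ≤ rCount l + 1 := by
  rcases l with _ | ⟨_ | _ | _, t⟩ <;>
    simp [mulR2, rCount_nil, rCount_cons_s, rCount_cons_r, rCount_cons_r2, add_assoc]

theorem rCount_nf_mul_le {y : B3} (hy : y ∈ S₃) (g : B3) :
    rCount (nf (y * g)) ≤ rCount (nf g) + 1 := by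
  simp only [mem_insert_iff, mem_singleton_iff] at hy
  rcases hy with rfl | rfl | rfl | rfl
  · simpa [nf_σ0_mul, rCount_mulS] using rCount_mulR2_le (mulS (nf g))
  · simpa [nf_σ0_inv_mul, rCount_mulS] using rCount_mulR_le (nf g)
  · simpa [nf_σ1_mul, rCount_mulS] using rCount_mulR2_le (nf g)
  · simpa [nf_σ1_inv_mul, rCount_mulS] using rCount_mulR_le (mulS (nf g))

theorem rCount_nf_le_wordLength (g : B3) : rCount (nf g) ≤ wordLength S₃ g := by
  have := le_wordLength closure_gens (f := fun g ↦ rCount (nf g)) (by simp [nf_one, rCount])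
    (fun y hy g ↦ mod_cast rCount_nf_mul_le hy g) g
  exact_mod_cast this

def x (p q : ℕ) : B3 := σ 0 ^ p * (σ 1 ^ q)⁻¹

def xWord : ℕ → ℕ → List Letter
  | 0, 0 => []
  | 0, q + 1 => r :: s :: xWord 0 q
  | p + 1, q => r2 :: s :: xWord p q

theorem mulS_xWord (p q : ℕ) : mulS (xWord p q) = s :: xWord p q := by
  rcases p with _ | _ <;> rcases q with _ | _ <;> simp [xWord, mulS]

theorem rCount_xWord (p q : ℕ) : rCount (xWord p q) = p + q := by
  induction p with
  | zero =>
    induction q with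
    | zero => simp [xWord, rCount_nil]
    | succ q ih => simp [xWord, rCount_cons_s, rCount_cons_r, ih]
  | succ p ih => simp [xWord, rCount_cons_s, rCount_cons_r2, ih]; omega

theorem nf_x (p q : ℕ) : nf (x p q) = xWord p q := by
  induction p with
  | zero =>
    induction q with
    | zero => simp [x, nf_one, xWord]
    | succ q ih =>
      rw [x, pow_zero, one_mul, pow_succ, mul_inv_rev, nf_σ1_inv_mul]
      simp_all [x, mulS_xWord, mulR, xWord]
  | succ p ih =>
    rw [x, pow_succ', mul_assoc, nf_σ0_mul, ← x, ih, mulS_xWord, xWord.eq_3]; rfl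

theorem wordLength_x (p q : ℕ) : wordLength S₃ (x p q) = p + q := by
  refine le_antisymm ?_ (rCount_xWord p q ▸ nf_x p q ▸ rCount_nf_le_wordLength (x p q))
  calc wordLength S₃ (x p q)
      ≤ wordLength S₃ (σ 0 ^ p) + wordLength S₃ (σ 1 ^ q)⁻¹ := wordLength_mul_le closure_gens _ _
    _ ≤ p + q := by
      rw [wordLength_inv closure_gens inv_mem_gens]
      gcongr <;> exact wordLength_pow_le (by simp) _

theorem nf_eq_of_nf_mul_eq_xWord {y g : B3} (hy : y ∈ S₃) {p q : ℕ}
    (h : nf (y * g) = xWord p q) (hlt : rCount (nf g) < p + q) :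
    (y = σ 0 ∧ ∃ p', p = p' + 1 ∧ nf g = xWord p' q) ∨
      (y = (σ 1)⁻¹ ∧ p = 0 ∧ ∃ q', q = q' + 1 ∧ nf g = xWord 0 q') := by
  have hg : nf g = nf (y⁻¹ * (y * g)) := by rw [inv_mul_cancel_left]
  simp only [mem_insert_iff, mem_singleton_iff] at hy
  rcases hy with rfl | rfl | rfl | rfl <;>
    simp only [inv_inv, nf_σ0_mul, nf_σ1_mul, nf_σ0_inv_mul, nf_σ1_inv_mul, h] at hg <;>
    rw [hg] at hlt ⊢ <;> rcases p with _ | p <;> rcases q with _ | q <;>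
    simp_all [xWord, mulS, mulR, mulR2, rCount_cons_s, rCount_cons_r, rCount_cons_r2,
      rCount_xWord] <;> omega

theorem eq_replicate_of_nf_prod_eq_xWord {l : List B3} (hl : ∀ y ∈ l, y ∈ S₃) {p q : ℕ}
    (h : nf l.prod = xWord p q) (hlen : l.length = p + q) :
    l = List.replicate p (σ 0) ++ List.replicate q (σ 1)⁻¹ := by
  induction l generalizing p q with
  | nil =>
    obtain ⟨rfl, rfl⟩ : p = 0 ∧ q = 0 := by simp at hlen; omega
    rfl
  | cons y l ih =>
    have hl' : ∀ z ∈ l, z ∈ S₃ := fun z hz ↦ hl z (List.mem_cons_of_mem y hz)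
    rw [List.length_cons] at hlen
    have hlt : rCount (nf l.prod) < p + q := by
      have := rCount_nf_le_wordLength l.prod
      have := wordLength_list_prod_le hl'
      omega
    rw [List.prod_cons] at h
    rcases nf_eq_of_nf_mul_eq_xWord (hl y List.mem_cons_self) h hlt with
      ⟨rfl, p, rfl, hp⟩ | ⟨rfl, rfl, q, rfl, hq⟩
    · rw [ih hl' hp (by omega)]; simp [List.replicate_succ]
    · rw [ih hl' hq (by omega)]; simp [List.replicate_succ]

theorem eq_σ0_pow_of_wordLength_add_eq {g : B3} {n : ℕ} (hgn : wordLength S₃ g ≤ n)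
    (h : wordLength S₃ g + wordLength S₃ (g⁻¹ * x n n) = n + n) :
    g = σ 0 ^ wordLength S₃ g := by
  obtain ⟨l₁, hl₁, hprod₁, hlen₁⟩ := exists_list_prod_eq_of_wordLength closure_gens g
  obtain ⟨l₂, hl₂, hprod₂, hlen₂⟩ :=
    exists_list_prod_eq_of_wordLength closure_gens (g⁻¹ * x n n)
  have hl : l₁ ++ l₂ = List.replicate n (σ 0) ++ List.replicate n (σ 1)⁻¹ :=
    eq_replicate_of_nf_prod_eq_xWord (fun y hy ↦ (List.mem_append.mp hy).elim (hl₁ y) (hl₂ y))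
      (by rw [List.prod_append, hprod₁, hprod₂, mul_inv_cancel_left, nf_x])
      (by rw [List.length_append, hlen₁, hlen₂, h])
  have : l₁ = List.replicate (wordLength S₃ g) (σ 0) := by
    simpa [hlen₁, List.take_append_of_le_length, hgn] using congrArg (List.take l₁.length) hl
  rw [← List.prod_replicate, ← this, hprod₁]

theorem lift_exponentSum_braidRel :
    ∀ g ∈ braidRel, FreeGroup.lift (fun _ ↦ Multiplicative.ofAdd (1 : ℤ)) g = 1 := by
  rintro _ rfl
  simp only [map_mul, map_inv, FreeGroup.lift_apply_of]
  exact (braid_relator_eq_one_iff _ _).mpr rfl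

noncomputable def exponentSum : B3 →* Multiplicative ℤ :=
  PresentedGroup.toGroup lift_exponentSum_braidRel

theorem exponentSum_σ (i : Fin 2) : exponentSum (σ i) = Multiplicative.ofAdd 1 :=
  PresentedGroup.toGroup.of _

theorem abs_exponentSum_le_wordLength (g : B3) :
    |(exponentSum g).toAdd| ≤ wordLength S₃ g := by
  refine le_wordLength closure_gens (f := fun g ↦ |(exponentSum g).toAdd|) (by simp)
    (fun y hy g ↦ ?_) g
  have : |(exponentSum y).toAdd| = 1 := by
    simp only [mem_insert_iff, mem_singleton_iff] at hy
    rcases hy with rfl | rfl | rfl | rfl <;> simp [exponentSum_σ]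
  rw [map_mul, toAdd_mul, ← this, add_comm]
  exact abs_add_le _ _

theorem wordLength_σ0_mul_σ1_mul_σ0_pow (m : ℕ) :
    wordLength S₃ (σ 0 * σ 1 * σ 0 ^ m) = m + 2 := by
  refine le_antisymm ?_ ?_
  · have := wordLength_mul_mul_le closure_gens (σ 0) (σ 1) (σ 0 ^ m)
    have := wordLength_le_one (S := S₃) (x := σ 0) (by simp)
    have := wordLength_le_one (S := S₃) (x := σ 1) (by simp)
    have := wordLength_pow_le (S := S₃) (x := σ 0) (by simp) m
    omega
  · have := abs_exponentSum_le_wordLength (σ 0 * σ 1 * σ 0 ^ m)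
    simp only [map_mul, map_pow, exponentSum_σ, toAdd_mul, toAdd_pow, toAdd_ofAdd,
      nsmul_eq_mul, mul_one] at this
    rw [abs_of_nonneg (by positivity)] at this
    omega

theorem σ_braid : σ 0 * σ 1 * σ 0 = σ 1 * σ 0 * σ 1 :=
  (braid_relator_eq_one_iff _ _).mp (PresentedGroup.one_of_mem (rels := braidRel) rfl)

theorem σ0_mul_σ1_mul_x (n : ℕ) :
    σ 0 * σ 1 * x (n + 1) (n + 1) = σ 1 ^ (n + 1) * σ 0 * (σ 1 ^ n)⁻¹ := by
  have : SemiconjBy (σ 0 * σ 1) (σ 0) (σ 1) := by simpa [SemiconjBy, mul_assoc] using σ_braid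
  rw [x, ← mul_assoc, (this.pow_right (n + 1)).eq, pow_succ (σ 1) n]
  group

theorem wordLength_σ0_mul_σ1_mul_x_le (n : ℕ) :
    wordLength S₃ (σ 0 * σ 1 * x (n + 1) (n + 1)) ≤ 2 * (n + 1) := by
  rw [σ0_mul_σ1_mul_x]
  have := wordLength_mul_mul_le closure_gens (σ 1 ^ (n + 1)) (σ 0) (σ 1 ^ n)⁻¹
  rw [wordLength_inv closure_gens inv_mem_gens] at this
  have := wordLength_pow_le (S := S₃) (x := σ 1) (by simp) (n + 1)
  have := wordLength_le_one (S := S₃) (x := σ 0) (by simp)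
  have := wordLength_pow_le (S := S₃) (x := σ 1) (by simp) n
  omega

theorem wordDist_x_one (n : ℕ) : wordDist S₃ (x n n) 1 = 2 * n := by
  rw [wordDist_one_right closure_gens inv_mem_gens, wordLength_x, two_mul]

theorem wordDist_σ0_pow_inv_σ0_mul_σ1 (m : ℕ) :
    wordDist S₃ (σ 0 ^ m) (σ 0 * σ 1)⁻¹ = m + 2 := by
  rw [wordDist_eq_wordLength, ← mul_inv_rev, wordLength_inv closure_gens inv_mem_gens,
    wordLength_σ0_mul_σ1_mul_σ0_pow]

instance : Countable B3 := (PresentedGroup.mk_surjective braidRel).countable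

def IsHorofunctionAlong (φ : ℕ → ℕ) (h : B3 → ℝ) : Prop :=
  ∀ y, ∀ᶠ k in atTop, (wordDist S₃ (x (φ k) (φ k)) y : ℝ) - 2 * φ k = h y

theorem exists_isHorofunctionAlong : ∃ φ, StrictMono φ ∧ ∃ h, IsHorofunctionAlong φ h := by
  have hcomm := wordDist_comm closure_gens inv_mem_gens
  have htri := wordDist_triangle closure_gens
  obtain ⟨φ, hφ, h, hh⟩ := exists_strictMono_eventually_eq
    (fun n y ↦ (wordDist S₃ (x n n) y : ℤ) - 2 * n) (fun y ↦ wordDist S₃ 1 y) fun n y ↦ by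
      have := htri (x n n) 1 y
      have := htri (x n n) y 1
      rw [wordDist_x_one, hcomm y] at *
      rw [abs_le]
      constructor <;> omega
  exact ⟨φ, hφ, fun y ↦ h y, fun y ↦ (hh y).mono fun k hk ↦ by simp [← hk]⟩

namespace IsHorofunctionAlong

variable {φ : ℕ → ℕ} {h : B3 → ℝ}

theorem apply_one (hh : IsHorofunctionAlong φ h) : h 1 = 0 := by
  obtain ⟨k, hk⟩ := (hh 1).exists
  simpa [wordDist_x_one] using hk.symm

theorem apply_inv_σ0_mul_σ1_nonpos (hh : IsHorofunctionAlong φ h) (hφ : StrictMono φ) :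
    h (σ 0 * σ 1)⁻¹ ≤ 0 := by
  obtain ⟨k, hk, hφk⟩ := ((hh _).and (hφ.tendsto_atTop.eventually_ge_atTop 1)).exists
  obtain ⟨n, hn⟩ := Nat.exists_eq_add_of_le' hφk
  rw [hn, wordDist_eq_wordLength, ← mul_inv_rev, wordLength_inv closure_gens inv_mem_gens] at hk
  have : (wordLength S₃ (σ 0 * σ 1 * x (n + 1) (n + 1)) : ℝ) ≤ 2 * (n + 1) := by
    exact_mod_cast wordLength_σ0_mul_σ1_mul_x_le n
  rw [← hk]
  push_cast
  linarith

theorem eq_σ0_pow (hh : IsHorofunctionAlong φ h) (hφ : StrictMono φ) {g : B3}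
    (hg : h g = -wordLength S₃ g) : g = σ 0 ^ wordLength S₃ g := by
  obtain ⟨k, hk, hφk⟩ :=
    ((hh g).and (hφ.tendsto_atTop.eventually_ge_atTop (wordLength S₃ g))).exists
  refine eq_σ0_pow_of_wordLength_add_eq hφk ?_
  rw [hg, wordDist_eq_wordLength, ← wordLength_inv closure_gens inv_mem_gens, mul_inv_rev,
    inv_inv] at hk
  have : ((wordLength S₃ g + wordLength S₃ (g⁻¹ * x (φ k) (φ k)) : ℕ) : ℝ) = (φ k + φ k : ℕ) := by
    push_cast; linarith
  exact_mod_cast this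

theorem isEventualHorofunction (hh : IsHorofunctionAlong φ h) :
    IsEventualHorofunction (fun a b ↦ (wordDist S₃ a b : ℝ))
      (insert 0 (range fun k ↦ 2 * (φ k : ℝ))) (fun t ↦ x ⌊t / 2⌋₊ ⌊t / 2⌋₊) h :=
  fun y ↦ eventually_atTop_inf_principal_insert_range ((hh y).mono fun k hk ↦ by simpa using hk)

end IsHorofunctionAlong

end B3

open B3 in
/-- The metric boundary of the Cayley graph of `B₃` with generating set
`S = {σ₁, σ₁⁻¹, σ₂, σ₂⁻¹}` contains a point which is not a Busemann point: there is a
weakly-geodesic ray whose boundary limits differ from those of every geodesic ray at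
some pair `y, z`. -/
theorem stmt17 :
    ∃ T : Set ℝ, ∃ γ : ℝ → B3, IsRayDomain T ∧
      WeaklyGeodesicRay (fun g h => (wordDist {σ 0, (σ 0)⁻¹, σ 1, (σ 1)⁻¹} g h : ℝ)) T γ ∧
      ∀ (T' : Set ℝ) (γ' : ℝ → B3), IsRayDomain T' →
        GeodesicRay (fun g h => (wordDist {σ 0, (σ 0)⁻¹, σ 1, (σ 1)⁻¹} g h : ℝ)) T' γ' →
        ∃ (y z : B3) (L L' : ℝ),
          RayLimit (fun g h => (wordDist {σ 0, (σ 0)⁻¹, σ 1, (σ 1)⁻¹} g h : ℝ)) T γ y z L ∧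
          RayLimit (fun g h => (wordDist {σ 0, (σ 0)⁻¹, σ 1, (σ 1)⁻¹} g h : ℝ)) T' γ' y z L' ∧
          L ≠ L' := by
  obtain ⟨φ, hφ, h, hh⟩ := exists_isHorofunctionAlong
  have hγ := hh.isEventualHorofunction
  refine ⟨_, _, isRayDomain_insert_zero_range (g := fun k ↦ 2 * (φ k : ℝ))
    (fun k ↦ by positivity)
    (Tendsto.const_mul_atTop two_pos (tendsto_natCast_atTop_atTop.comp hφ.tendsto_atTop)),
    hγ.weaklyGeodesicRay (by simpa [x] using hh.apply_one), fun T' γ' hT' hγ' ↦ ?_⟩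
  obtain ⟨F, hF⟩ := hγ'.exists_isEventualHorofunction (wordDist_comm closure_gens inv_mem_gens)
    (wordDist_triangle closure_gens) hT'
  by_contra! hne
  have hdiff y z : h y - h z = F y - F z := hne y z _ _ (hγ.rayLimit y z) (hF.rayLimit y z)
  have := hT'.neBot
  obtain ⟨s, hs₁, hs₂, hs⟩ := ((hF 1).and ((hF (σ 0 * σ 1)⁻¹).and
    (eventually_mem_principal T' |>.filter_mono inf_le_right))).exists
  have hFs := hF.apply_geodesicRay hT' hγ' hs
  beta_reduce at hs₁ hs₂
  rw [wordDist_one_right closure_gens inv_mem_gens] at hs₁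
  have hp := hh.eq_σ0_pow hφ (g := γ' s) (by linarith [hdiff (γ' s) 1, hh.apply_one])
  rw [hp, wordDist_σ0_pow_inv_σ0_mul_σ1] at hs₂
  push_cast at hs₂
  linarith [hdiff (σ 0 * σ 1)⁻¹ (γ' s), hdiff (γ' s) 1, hh.apply_one,
    hh.apply_inv_σ0_mul_σ1_nonpos hφ]
end
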